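/- arXiv:2504.00658 — 2 statements merged into one kernel-verified Lean document; each statement's English description precedes it below -/
import Mathlib

section
/- Let λ, β ≥ 0, let Y ∈ ℂ with Re(Y) > 0, and let c₀ > 0. Then |λ + iY c₀ β| ≥ |sin(θ/2)| · min(1, |Y| c₀) · (λ + β), where θ = Arg(Y) - π/2. -/
/-!
For `z ∈ ℂ` and real `a, b`,
`2‖z‖ ‖a + z b‖² - (‖z‖ + Re z)(a + ‖z‖ b)² = (‖z‖ - Re z)(a - ‖z‖ b)² ≥ 0`.
With `z = iY` the weight is `‖z‖ + Re z = ‖Y‖ - Im Y = 2‖Y‖ sin²(θ/2)`, so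
`|sin(θ/2)| (λ + |Y| c₀ β) ≤ |λ + iY c₀ β|`, and `min(1, |Y| c₀)(λ + β) ≤ λ + |Y| c₀ β`.
-/

open Real

theorem Complex.norm_add_re_mul_sq_le (a b : ℝ) (z : ℂ) :
    (‖z‖ + z.re) * (a + ‖z‖ * b) ^ 2 ≤ 2 * ‖z‖ * ‖(a : ℂ) + z * b‖ ^ 2 := by
  have hnorm : ‖z‖ ^ 2 = z.re ^ 2 + z.im ^ 2 := by
    rw [Complex.sq_norm, Complex.normSq_apply]; ring
  have hexpand : ‖(a : ℂ) + z * b‖ ^ 2 = a ^ 2 + 2 * a * b * z.re + b ^ 2 * ‖z‖ ^ 2 := by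
    rw [Complex.sq_norm, Complex.normSq_apply, hnorm]
    simp only [add_re, ofReal_re, mul_re, ofReal_im, mul_zero, sub_zero, add_im, mul_im, zero_add]
    ring
  have hdefect : 0 ≤ (‖z‖ - z.re) * (a - ‖z‖ * b) ^ 2 :=
    mul_nonneg (sub_nonneg.mpr z.re_le_norm) (sq_nonneg _)
  rw [hexpand]
  linear_combination hdefect

theorem Complex.two_mul_norm_mul_sin_sq_half_arg_sub_pi_div_two (Y : ℂ) :
    2 * ‖Y‖ * Real.sin ((arg Y - π / 2) / 2) ^ 2 = ‖Y‖ + (I * Y).re := by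
  rw [Real.sin_sq_eq_half_sub, mul_div_cancel₀ _ two_ne_zero, Real.cos_sub_pi_div_two, I_mul_re]
  linear_combination (-1 : ℝ) * Y.norm_mul_sin_arg

theorem Complex.abs_sin_half_arg_sub_pi_div_two_mul_le (a b : ℝ) {Y : ℂ} (hY : Y ≠ 0) :
    |Real.sin ((arg Y - π / 2) / 2)| * (a + ‖Y‖ * b) ≤ ‖(a : ℂ) + I * Y * b‖ := by
  have hsq : (Real.sin ((arg Y - π / 2) / 2) * (a + ‖Y‖ * b)) ^ 2 ≤ ‖(a : ℂ) + I * Y * b‖ ^ 2 := by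
    have h := norm_add_re_mul_sq_le a b (I * Y)
    rw [norm_mul, norm_I, one_mul, ← two_mul_norm_mul_sin_sq_half_arg_sub_pi_div_two] at h
    rw [mul_pow]
    exact le_of_mul_le_mul_left (by rwa [← mul_assoc]) (by positivity : (0 : ℝ) < 2 * ‖Y‖)
  calc _ ≤ |Real.sin ((arg Y - π / 2) / 2)| * |a + ‖Y‖ * b| :=
        mul_le_mul_of_nonneg_left (le_abs_self _) (abs_nonneg _)
    _ = |Real.sin ((arg Y - π / 2) / 2) * (a + ‖Y‖ * b)| := (abs_mul _ _).symm
    _ ≤ _ := abs_le_of_sq_le_sq hsq (norm_nonneg _)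

theorem min_one_mul_add_le {x y t : ℝ} (hx : 0 ≤ x) (hy : 0 ≤ y) :
    min 1 t * (x + y) ≤ x + t * y := by
  rw [mul_add]
  exact add_le_add (mul_le_of_le_one_left hx (min_le_left 1 t))
    (mul_le_mul_of_nonneg_right (min_le_right 1 t) hy)

theorem coercivity_estimate_general (lam beta : ℝ) (hl : 0 ≤ lam) (hb : 0 ≤ beta)
    (Y : ℂ) (hY : 0 < Y.re) (c₀ : ℝ) :
    |Real.sin ((Complex.arg Y - Real.pi / 2) / 2)| * min 1 (‖Y‖ * c₀)
        * (lam + beta)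
      ≤ ‖(lam : ℂ) + Complex.I * Y * (c₀ : ℂ) * (beta : ℂ)‖ := by
  have hY0 : Y ≠ 0 := fun h => by simp [h] at hY
  have key := Complex.abs_sin_half_arg_sub_pi_div_two_mul_le lam (c₀ * beta) hY0
  push_cast [← mul_assoc] at key
  rw [mul_assoc]
  exact (mul_le_mul_of_nonneg_left (min_one_mul_add_le hl hb) (abs_nonneg _)).trans key

theorem coercivity_estimate (lam beta : ℝ) (hl : 0 ≤ lam) (hb : 0 ≤ beta)
    (Y : ℂ) (hY : 0 < Y.re) (c₀ : ℝ) (hc : 0 < c₀) :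
    |Real.sin ((Complex.arg Y - Real.pi / 2) / 2)| * min 1 (‖Y‖ * c₀)
        * (lam + beta)
      ≤ ‖(lam : ℂ) + Complex.I * Y * (c₀ : ℂ) * (beta : ℂ)‖ :=
  coercivity_estimate_general lam beta hl hb Y hY c₀
end

section
/- With the notation of the previous statement, β belongs to the limit set of 𝓑_{v,r} as r → -∞ if and only if β ∈ D(0,1) ∩ [({Im > 0} \ D(1,1)) ∪ ({Im < 0} ∩ closure(D(1,1)))]. -/
/-- The constant `K²(β) = β²/(4(1-β))`. -/
noncomputable def Ksq (β : ℂ) : ℂ := β ^ 2 / (4 * (1 - β))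

/-- The admissible zone for the viscosity parameter, with admittance ratio `r`. -/
def admissibleZone (r : ℝ) : Set ℂ :=
  {β | ‖β‖ < 1 ∧ (Ksq β).re - r * (Ksq β).im < 0}

/-!
Write `N = ‖β - 1‖`. A direct computation gives `Im K²(β) = Im β · (1 - N²) / (4N²)`, and as `r → -∞`
the quantity `Re K² - r Im K²` is eventually negative iff `Im K² < 0`, or `Im K² = 0` and `Re K² < 0`.
Off the real axis, `Im K² < 0` says that `Im β` and `N - 1` have strictly the same sign, while on the
circle `N = 1` one has `Re K²(β) = -‖β‖²/4 < 0`, which adds the arc `|β - 1| = 1` to both half-planes.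
On the real axis `K²(β) = β²/(4(1 - β)) ≥ 0`, so no real point belongs to the limit set.
-/

open Filter

theorem eventually_atBot_sub_mul_neg_iff (a b : ℝ) :
    (∀ᶠ r in atBot, a - r * b < 0) ↔ b < 0 ∨ (b = 0 ∧ a < 0) := by
  rcases lt_trichotomy b 0 with hb | rfl | hb
  · simp only [hb, true_or, iff_true]
    filter_upwards [eventually_lt_atBot (a / b)] with r hr
    linarith [(lt_div_iff_of_neg hb).1 hr]
  · simp only [mul_zero, sub_zero, eventually_const, lt_irrefl, false_or, true_and]
  · simp only [hb.not_gt, hb.ne', false_or, false_and, iff_false]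
    intro h
    obtain ⟨r, hr, hr'⟩ := (h.and (eventually_le_atBot (a / b))).exists
    linarith [(le_div_iff₀ hb).1 hr']

theorem Ksq_im (β : ℂ) :
    (Ksq β).im = β.im * (1 - ‖β - 1‖ ^ 2) / (4 * ‖β - 1‖ ^ 2) := by
  rw [Ksq, Complex.div_im, Complex.sq_norm]
  simp only [pow_two, Complex.mul_re, Complex.mul_im, Complex.sub_re, Complex.sub_im,
    Complex.one_re, Complex.one_im, Complex.re_ofNat, Complex.im_ofNat, Complex.normSq_apply,
    zero_sub, mul_neg, zero_mul, neg_zero, sub_zero, add_zero, neg_mul, neg_neg]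
  field_simp
  ring

theorem Ksq_re (β : ℂ) :
    (Ksq β).re = ((1 + ‖β - 1‖ ^ 2) * (1 - β.re) - 2 * ‖β - 1‖ ^ 2) / (4 * ‖β - 1‖ ^ 2) := by
  rw [Ksq, Complex.div_re, Complex.sq_norm]
  simp only [pow_two, Complex.mul_re, Complex.mul_im, Complex.sub_re, Complex.sub_im,
    Complex.one_re, Complex.one_im, Complex.re_ofNat, Complex.im_ofNat, Complex.normSq_apply,
    zero_sub, mul_neg, zero_mul, neg_zero, sub_zero, add_zero, neg_mul, neg_neg]
  field_simp
  ring

theorem Ksq_ofReal_re_nonneg {x : ℝ} (hx : x ≤ 1) : 0 ≤ (Ksq x).re := by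
  have hK : Ksq x = ((x ^ 2 / (4 * (1 - x)) : ℝ) : ℂ) := by simp [Ksq]
  rw [hK, Complex.ofReal_re]
  exact div_nonneg (sq_nonneg x) (by linarith)

theorem Ksq_re_of_norm_sub_one_eq_one {β : ℂ} (h : ‖β - 1‖ = 1) :
    (Ksq β).re = -‖β‖ ^ 2 / 4 := by
  have hN : ‖β - 1‖ ^ 2 = ‖β‖ ^ 2 - 2 * β.re + 1 := by
    simp only [Complex.sq_norm, Complex.normSq_apply, Complex.sub_re, Complex.sub_im,
      Complex.one_re, Complex.one_im]
    ring
  rw [h] at hN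
  rw [Ksq_re, h]
  linarith

theorem Ksq_im_neg_or_re_neg_iff {β : ℂ} (hβ : ‖β‖ < 1) :
    (Ksq β).im < 0 ∨ ((Ksq β).im = 0 ∧ (Ksq β).re < 0) ↔
      (0 < β.im ∧ 1 ≤ ‖β - 1‖) ∨ (β.im < 0 ∧ ‖β - 1‖ ≤ 1) := by
  rcases eq_or_ne β.im 0 with hs | hs
  · obtain ⟨x, rfl⟩ : ∃ x : ℝ, β = x := ⟨β.re, Complex.ext rfl (by simp [hs])⟩
    have hx : x ≤ 1 := (le_abs_self x).trans (by simpa using hβ.le)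
    simp [Ksq_im, (Ksq_ofReal_re_nonneg hx).not_gt]
  have hD : 0 < 4 * ‖β - 1‖ ^ 2 := by
    have : β ≠ 1 := by rintro rfl; simp at hβ
    have := norm_pos_iff.2 (sub_ne_zero.2 this)
    positivity
  set P := β.im * (1 - ‖β - 1‖ ^ 2)
  have hre : P = 0 → (Ksq β).re < 0 := fun hP ↦ by
    have hN : ‖β - 1‖ = 1 := by
      have := (mul_eq_zero.1 hP).resolve_left hs
      nlinarith [norm_nonneg (β - 1)]
    have : 0 < ‖β‖ := norm_pos_iff.2 fun h ↦ hs (by simp [h])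
    rw [Ksq_re_of_norm_sub_one_eq_one hN]
    nlinarith
  have hlhs : (Ksq β).im < 0 ∨ ((Ksq β).im = 0 ∧ (Ksq β).re < 0) ↔ P ≤ 0 := by
    rw [Ksq_im, div_lt_iff₀ hD, zero_mul, div_eq_zero_iff, or_iff_left hD.ne']
    constructor
    · rintro (h | ⟨h, -⟩)
      exacts [h.le, h.le]
    · intro h
      exact h.lt_or_eq.imp_right fun h ↦ ⟨h, hre h⟩
  have hrhs : (0 < β.im ∧ 1 ≤ ‖β - 1‖) ∨ (β.im < 0 ∧ ‖β - 1‖ ≤ 1) ↔ P ≤ 0 := by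
    rw [mul_nonpos_iff, sub_nonneg, sub_nonpos, one_le_sq_iff₀ (norm_nonneg _),
      sq_le_one_iff₀ (norm_nonneg _)]
    rcases hs.lt_or_gt with hs | hs <;> simp [hs, hs.le, hs.not_gt, hs.not_ge]
  rw [hlhs, hrhs]

theorem limit_set_admissibleZone_bot (β : ℂ) :
    (∃ R : ℝ, ∀ r : ℝ, r ≤ R → β ∈ admissibleZone r) ↔
    β ∈ Metric.ball (0 : ℂ) 1 ∩
      (({z : ℂ | 0 < z.im} \ Metric.ball (1 : ℂ) 1) ∪
       ({z : ℂ | z.im < 0} ∩ Metric.closedBall (1 : ℂ) 1)) := by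
  calc (∃ R : ℝ, ∀ r : ℝ, r ≤ R → β ∈ admissibleZone r)
      ↔ ∀ᶠ r in atBot, β ∈ admissibleZone r := eventually_atBot.symm
    _ ↔ ‖β‖ < 1 ∧ ∀ᶠ r in atBot, (Ksq β).re - r * (Ksq β).im < 0 := by
      simp only [admissibleZone, Set.mem_ofPred_eq, eventually_and, eventually_const]
    _ ↔ ‖β‖ < 1 ∧ ((Ksq β).im < 0 ∨ ((Ksq β).im = 0 ∧ (Ksq β).re < 0)) := by
      rw [eventually_atBot_sub_mul_neg_iff]
    _ ↔ ‖β‖ < 1 ∧ ((0 < β.im ∧ 1 ≤ ‖β - 1‖) ∨ (β.im < 0 ∧ ‖β - 1‖ ≤ 1)) :=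
      and_congr_right Ksq_im_neg_or_re_neg_iff
    _ ↔ _ := by
      simp only [Set.mem_inter_iff, Set.mem_union, Set.mem_sdiff, Set.mem_ofPred_eq,
        Metric.mem_ball, Metric.mem_closedBall, dist_zero_right, Complex.dist_eq, not_lt]
end
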